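/- arXiv:2411.04572 — 5 statements merged into one kernel-verified Lean document; each statement's English description precedes it below -/
import Mathlib

section
/- Let K₁ and K₂ be ordered simplicial complexes (viewed as regular path complexes) and let f : V(K₁) → V(K₂) be a weak simplicial morphism. Then f is a weak path morphism K₁ → K₂ if and only if f is a triangle-collapsing simplicial morphism. -/
/-- An elementary path is a nonempty finite sequence of vertices;
it is regular if no two consecutive vertices are equal. -/
def IsRegularPath {V : Type*} (p : List V) : Prop := p.Chain' (· ≠ ·)

/-- An ordered simplicial complex on `V`: a set of nonempty lists of pairwise
distinct vertices, containing all singletons and closed under deleting any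
single vertex from a path (with at least two vertices). -/
structure IsOSC {V : Type*} (K : Set (List V)) : Prop where
  ne_nil : ∀ p ∈ K, p ≠ []
  nodup : ∀ p ∈ K, p.Nodup
  singleton_mem : ∀ v : V, [v] ∈ K
  eraseIdx_mem : ∀ p ∈ K, 2 ≤ p.length → ∀ i < p.length, p.eraseIdx i ∈ K

/-- A vertex map is a weak path morphism if the image of every path is
irregular or belongs to the codomain path complex. -/
def IsWeakPathMorphism {V W : Type*} (P₁ : Set (List V)) (P₂ : Set (List W))
    (f : V → W) : Prop :=
  ∀ p ∈ P₁, ¬ IsRegularPath (p.map f) ∨ p.map f ∈ P₂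

/-- A vertex map is a weak simplicial morphism if the image of every simplex is
non-simplicial or belongs to the codomain complex. -/
def IsWeakSimplicialMorphism {V W : Type*} (K₁ : Set (List V)) (K₂ : Set (List W))
    (f : V → W) : Prop :=
  ∀ p ∈ K₁, ¬ (p.map f).Nodup ∨ p.map f ∈ K₂

/-- A triangle-collapsing simplicial morphism. -/
def IsTriangleCollapsing {V W : Type*} (K₁ : Set (List V)) (K₂ : Set (List W))
    (f : V → W) : Prop :=
  IsWeakSimplicialMorphism K₁ K₂ f ∧
  ∀ v₀ v₁ v₂ : V, [v₀, v₁, v₂] ∈ K₁ → f v₀ = f v₂ → f v₀ = f v₁ ∧ f v₁ = f v₂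

/-! Simplicial paths are regular, so a weak path morphism is a weak simplicial morphism, and it
must collapse every triangle `v₀v₁v₂` with `f v₀ = f v₂`: otherwise the image `f v₀ f v₁ f v₀`
would be a regular path that is not simplicial, hence not in `K₂`.
Conversely, if `f` collapses triangles and `f(p)` is regular for a simplex `p = v₀…v_k`, then
`f(p)` is `Nodup`: a repetition `f vᵢ = f vⱼ` with `i < j` would collapse the face `vᵢvᵢ₊₁vⱼ`
and give `f vᵢ = f vᵢ₊₁`. So `f(p)` is simplicial, and lies in `K₂` because `f` is a weak
simplicial morphism. -/

theorem isRegularPath_singleton {V : Type*} (v : V) : IsRegularPath [v] :=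
  List.IsChain.singleton v

theorem isRegularPath_cons_cons {V : Type*} {v w : V} {p : List V} :
    IsRegularPath (v :: w :: p) ↔ v ≠ w ∧ IsRegularPath (w :: p) :=
  List.isChain_cons_cons

theorem isRegularPath_of_nodup {V : Type*} {p : List V} (hp : p.Nodup) : IsRegularPath p :=
  List.Pairwise.isChain hp

theorem IsWeakPathMorphism.isWeakSimplicialMorphism {V W : Type*} {K₁ : Set (List V)}
    {K₂ : Set (List W)} {f : V → W} (hf : IsWeakPathMorphism K₁ K₂ f) :
    IsWeakSimplicialMorphism K₁ K₂ f := fun p hp =>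
  (hf p hp).imp_left fun hirr hnd => hirr (isRegularPath_of_nodup hnd)

theorem IsWeakPathMorphism.eq_of_triangle_mem {V W : Type*} {K₁ : Set (List V)}
    {K₂ : Set (List W)} {f : V → W} (hf : IsWeakPathMorphism K₁ K₂ f)
    (hK₂ : ∀ q ∈ K₂, q.Nodup) {v₀ v₁ v₂ : V} (ht : [v₀, v₁, v₂] ∈ K₁) (h02 : f v₀ = f v₂) :
    f v₀ = f v₁ := by
  by_contra h01
  have hreg : IsRegularPath ([v₀, v₁, v₂].map f) := by
    simp only [List.map_cons, List.map_nil, isRegularPath_cons_cons]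
    exact ⟨h01, fun h12 => h01 (h02.trans h12.symm), isRegularPath_singleton _⟩
  have hnotNodup : ¬ ([v₀, v₁, v₂].map f).Nodup := by simp [h02]
  rcases hf _ ht with hirr | hmem
  · exact hirr hreg
  · exact hnotNodup (hK₂ _ hmem)

namespace IsOSC

variable {V : Type*} {K : Set (List V)}

/-- The prefix `r` is what lets the induction on `l₁ <+ l₂` pass through vertices that are kept. -/
theorem append_mem_of_sublist (hK : IsOSC K) {l₁ l₂ : List V} (h : l₁.Sublist l₂) :
    ∀ r : List V, r ++ l₂ ∈ K → r ++ l₁ ≠ [] → r ++ l₁ ∈ K := by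
  induction h with
  | slnil => exact fun _ hr _ => hr
  | @cons l₁ l₂ a _ ih =>
    intro r hr hne
    have hlen : 2 ≤ (r ++ a :: l₂).length := by
      rcases r with _ | ⟨b, r⟩
      · cases l₂ <;> simp_all
      · simp [Nat.succ_le_iff]
    have herase := hK.eraseIdx_mem _ hr hlen r.length (by simp)
    rw [List.eraseIdx_append_of_length_le le_rfl, Nat.sub_self, List.eraseIdx_cons_zero] at herase
    exact ih r herase hne
  | @cons_cons l₁ l₂ a _ ih =>
    intro r hr _
    simpa using ih (r ++ [a]) (by simpa using hr) (by simp)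

theorem mem_of_sublist (hK : IsOSC K) {p q : List V} (hp : p ∈ K) (hqp : q.Sublist p)
    (hq : q ≠ []) : q ∈ K :=
  hK.append_mem_of_sublist hqp [] hp hq

end IsOSC

theorem nodup_map_of_isRegularPath {V W : Type*} {K : Set (List V)} (hK : IsOSC K) {f : V → W}
    (hcollapse : ∀ v₀ v₁ v₂ : V, [v₀, v₁, v₂] ∈ K → f v₀ = f v₂ → f v₀ = f v₁) :
    ∀ p ∈ K, IsRegularPath (p.map f) → (p.map f).Nodup
  | [], _, _ => List.nodup_nil
  | [_], _, _ => List.nodup_singleton _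
  | v :: w :: p, hp, hreg => by
    obtain ⟨hvw, hreg⟩ := isRegularPath_cons_cons.mp hreg
    have htail := nodup_map_of_isRegularPath hK hcollapse (w :: p)
      (hK.mem_of_sublist hp (List.sublist_cons_self v _) (List.cons_ne_nil _ _)) hreg
    refine List.nodup_cons.mpr ⟨?_, htail⟩
    simp only [List.map_cons, List.mem_cons, List.mem_map]
    rintro (hw | ⟨u, hu, hfu⟩)
    · exact hvw hw
    · have ht : [v, w, u] ∈ K := hK.mem_of_sublist hp
        (((List.singleton_sublist.mpr hu).cons_cons w).cons_cons v) (List.cons_ne_nil _ _)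
      exact hvw (hcollapse v w u ht hfu.symm)

theorem weakPathMorphism_iff_triangleCollapsing_general {V W : Type*}
    (K₁ : Set (List V)) (K₂ : Set (List W)) (hK₁ : IsOSC K₁) (hK₂ : IsOSC K₂)
    (f : V → W) :
    IsWeakPathMorphism K₁ K₂ f ↔ IsTriangleCollapsing K₁ K₂ f := by
  constructor
  · intro hf
    refine ⟨hf.isWeakSimplicialMorphism, fun v₀ v₁ v₂ ht h02 => ?_⟩
    have h01 := hf.eq_of_triangle_mem hK₂.nodup ht h02
    exact ⟨h01, h01.symm.trans h02⟩
  · rintro ⟨hsimp, hcollapse⟩ p hp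
    by_cases hreg : IsRegularPath (p.map f)
    · have hnd := nodup_map_of_isRegularPath hK₁
        (fun v₀ v₁ v₂ ht h02 => (hcollapse v₀ v₁ v₂ ht h02).1) p hp hreg
      exact Or.inr ((hsimp p hp).resolve_left (not_not.mpr hnd))
    · exact Or.inl hreg

/-- A weak simplicial morphism between ordered simplicial complexes
is a weak path morphism iff it is a triangle-collapsing simplicial morphism. -/
theorem weakPathMorphism_iff_triangleCollapsing {V W : Type*}
    (K₁ : Set (List V)) (K₂ : Set (List W)) (hK₁ : IsOSC K₁) (hK₂ : IsOSC K₂)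
    (f : V → W) (hf : IsWeakSimplicialMorphism K₁ K₂ f) :
    IsWeakPathMorphism K₁ K₂ f ↔ IsTriangleCollapsing K₁ K₂ f :=
  weakPathMorphism_iff_triangleCollapsing_general K₁ K₂ hK₁ hK₂ f
end

section
/- For simple digraphs G and H, a vertex map f : V(G) → V(H) is a triangle-collapsing digraph map G → H if and only if it is a triangle-collapsing simplicial morphism dFl(G) → dFl(H). -/
/-- Weak digraph map: an edge is sent to an equality or an edge. -/
def IsWeakDigraphMap {V W : Type*} (E : V → V → Prop) (E' : W → W → Prop)
    (f : V → W) : Prop :=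
  ∀ v w, E v w → f v = f w ∨ E' (f v) (f w)

/-- Triangle-collapsing digraph map. -/
def IsTCDigraphMap {V W : Type*} (E : V → V → Prop) (E' : W → W → Prop)
    (f : V → W) : Prop :=
  IsWeakDigraphMap E E' f ∧
  ∀ v₀ v₁ v₂ : V, v₀ ≠ v₁ → v₀ ≠ v₂ → v₁ ≠ v₂ →
    E v₀ v₁ → E v₀ v₂ → E v₁ v₂ → f v₀ = f v₂ → f v₀ = f v₁ ∧ f v₁ = f v₂

/-- The directed flag complex of a digraph: all directed cliques, i.e. lists of
distinct vertices with an edge between each earlier and each later vertex. -/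
def dFl {V : Type*} (E : V → V → Prop) : Set (List V) :=
  {p | p ≠ [] ∧ p.Nodup ∧ p.Pairwise E}

/-- For simple digraphs, a vertex map is a triangle-collapsing digraph
map iff it is a triangle-collapsing simplicial morphism of directed flag complexes. -/
theorem tcDigraphMap_iff_tcSimplicial {V W : Type*}
    (E : V → V → Prop) (E' : W → W → Prop)
    (hE : ∀ v, ¬ E v v) (hE' : ∀ w, ¬ E' w w) (f : V → W) :
    IsTCDigraphMap E E' f ↔ IsTriangleCollapsing (dFl E) (dFl E') f := by
  constructor
  · rintro ⟨hw, ht⟩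
    constructor
    · intro p hp
      by_cases h : (p.map f).Nodup
      · right
        obtain ⟨hne, hnd, hpw⟩ := hp
        refine ⟨by simpa using hne, h, ?_⟩
        rw [List.pairwise_map]
        have h' : p.Pairwise (fun a b => f a ≠ f b) := List.pairwise_map.mp h
        exact (hpw.and h').imp fun hab => (hw _ _ hab.1).resolve_left hab.2
      · exact Or.inl h
    · intro v₀ v₁ v₂ hp heq
      obtain ⟨-, hnd, hpw⟩ := hp
      simp only [List.nodup_cons, List.mem_cons, List.pairwise_cons,
        List.mem_singleton, List.not_mem_nil] at hnd hpw
      exact ht v₀ v₁ v₂ (fun h => hnd.1 (Or.inl h)) (fun h => hnd.1 (Or.inr (Or.inl h)))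
        (fun h => hnd.2.1 (Or.inl h)) (hpw.1 v₁ (Or.inl rfl)) (hpw.1 v₂ (Or.inr (Or.inl rfl)))
        (hpw.2.1 v₂ (Or.inl rfl)) heq
  · rintro ⟨hw, ht⟩
    constructor
    · intro v w hvw
      have hne : v ≠ w := fun h => hE v (h ▸ hvw)
      rcases hw [v, w] ⟨by simp, by simp [hne], by simp [hvw]⟩ with h | h
      · left; simpa using h
      · right
        obtain ⟨-, -, hpw⟩ := h
        simpa using hpw
    · intro v₀ v₁ v₂ h01 h02 h12 e01 e02 e12 heq
      exact ht v₀ v₁ v₂ ⟨by simp, by simp [h01, h02, h12], by simp [e01, e02, e12]⟩ heq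
end

section
/- Let G and H be simple digraphs and let K be any ordered simplicial complex with Sk₁(dFl(G)) ⊆ K ⊆ dFl(G). Then a vertex map f : V(G) → V(H) is a weak digraph map G → H if and only if f is a weak simplicial morphism K → dFl(H). -/
/-- The 1-skeleton: paths with at most 2 vertices. -/
def Sk1 {V : Type*} (P : Set (List V)) : Set (List V) :=
  {p ∈ P | p.length ≤ 2}

/-- For simple digraphs `G`, `H` and any ordered simplicial complex `K`
with `Sk₁(dFl G) ⊆ K ⊆ dFl G`, a vertex map is a weak digraph map `G → H` iff it is a
weak simplicial morphism `K → dFl H`. -/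
theorem weakDigraphMap_iff_weakSimplicial {V W : Type*}
    (E : V → V → Prop) (E' : W → W → Prop)
    (hE : ∀ v, ¬ E v v) (hE' : ∀ w, ¬ E' w w)
    (K : Set (List V)) (hK : IsOSC K)
    (hK₁ : Sk1 (dFl E) ⊆ K) (hK₂ : K ⊆ dFl E) (f : V → W) :
    IsWeakDigraphMap E E' f ↔ IsWeakSimplicialMorphism K (dFl E') f := by
  constructor
  · intro hf p hp
    by_cases hnd : (p.map f).Nodup
    · right
      obtain ⟨hne, hpnd, hpw⟩ := hK₂ hp
      refine ⟨by simpa using hne, hnd, ?_⟩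
      rw [List.pairwise_map]
      have hne' : p.Pairwise (fun a b => f a ≠ f b) := by
        rw [List.Nodup, List.pairwise_map] at hnd; exact hnd
      exact (hpw.and hne').imp fun ⟨he, hne⟩ => (hf _ _ he).resolve_left hne
    · left; exact hnd
  · intro hf v w hvw
    by_cases hfe : f v = f w
    · exact Or.inl hfe
    · right
      have hvne : v ≠ w := fun h => hE v (h ▸ hvw)
      have hmem : [v, w] ∈ K := hK₁ ⟨⟨by simp, by simp [hvne], by simp [hvw]⟩, by simp⟩
      rcases hf _ hmem with h | h
      · exact absurd (by simp [hfe]) h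
      · exact (List.pairwise_cons.mp h.2.2).1 _ (by simp)
end

section
/- For every simple digraph G, the allowed path complex of the box product with the unit interval equals the cylinder of the allowed path complex: 𝒜(G □ I) = Cyl(𝒜(G)) as path complexes on V(G) × {0,1}. -/
/-- The cylinder of a path complex `P` on `V`, a path complex on `V × Bool`
(where `false` plays the role of `0` and `true` of `1`). -/
def CylSet {V : Type*} (P : Set (List V)) : Set (List (V × Bool)) :=
  {q | (∃ p ∈ P, q = p.map (·, false)) ∨
       (∃ p ∈ P, q = p.map (·, true)) ∨
       (∃ p ∈ P, ∃ i < p.length,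
          q = (p.take (i + 1)).map (·, false) ++ (p.drop i).map (·, true))}

/-- The allowed path complex of a digraph: all nonempty directed paths. -/
def allowedPaths {V : Type*} (E : V → V → Prop) : Set (List V) :=
  {p | p ≠ [] ∧ p.Chain' E}

/-- The box product `G □ I` of a digraph with the unit interval `I` (vertices `Bool`
with single edge `false → true`). -/
def boxRel {V : Type*} (E : V → V → Prop) : V × Bool → V × Bool → Prop :=
  fun a b => (a.1 = b.1 ∧ a.2 = false ∧ b.2 = true) ∨ (E a.1 b.1 ∧ a.2 = b.2)

/-!
In `G □ I` the second coordinate never decreases along an edge, and the only edges that change it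
are the vertical ones `(v, 0) → (v, 1)`. So an allowed path of `G □ I` runs along a path of `G` on
one level, possibly jumping once from level `0` to level `1` at a vertex it then repeats: this is
exactly a path of the cylinder. Inductively, prepending an edge of `G □ I` to a cylinder path
gives a cylinder path.
-/

section

variable {V : Type*} {E : V → V → Prop}

@[simp] theorem boxRel_mk_mk {v w : V} {b c : Bool} :
    boxRel E (v, b) (w, c) ↔ (v = w ∧ b = false ∧ c = true) ∨ (E v w ∧ b = c) := Iff.rfl

theorem isChain_map_mk_boxRel_iff (b : Bool) {p : List V} :
    (p.map (·, b)).IsChain (boxRel E) ↔ p.IsChain E := by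
  simp [List.isChain_map]

theorem isChain_boxRel_take_append_drop {p : List V} (hp : p.IsChain E) {i : ℕ}
    (hi : i < p.length) :
    ((p.take (i + 1)).map (·, false) ++ (p.drop i).map (·, true)).IsChain (boxRel E) := by
  refine List.isChain_append.2 ⟨(isChain_map_mk_boxRel_iff _).2 (hp.take _),
    (isChain_map_mk_boxRel_iff _).2 (hp.drop _), ?_⟩
  simp [List.getLast?_take, List.head?_drop, List.getElem?_eq_getElem hi]

theorem cylSet_allowedPaths_subset : CylSet (allowedPaths E) ⊆ allowedPaths (boxRel E) := by
  rintro _ (⟨p, ⟨hne, hp⟩, rfl⟩ | ⟨p, ⟨hne, hp⟩, rfl⟩ | ⟨p, ⟨-, hp⟩, i, hi, rfl⟩)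
  · exact ⟨by simpa using hne, (isChain_map_mk_boxRel_iff false).2 hp⟩
  · exact ⟨by simpa using hne, (isChain_map_mk_boxRel_iff true).2 hp⟩
  · exact ⟨by simp; omega, isChain_boxRel_take_append_drop hp hi⟩

theorem cons_mem_allowedPaths {v w : V} {p : List V} (hvw : E v w)
    (hp : w :: p ∈ allowedPaths E) : v :: w :: p ∈ allowedPaths E :=
  ⟨List.cons_ne_nil _ _, List.isChain_cons_cons.2 ⟨hvw, hp.2⟩⟩

theorem cons_mem_cylSet {a b : V × Bool} {t : List (V × Bool)} (hab : boxRel E a b)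
    (h : b :: t ∈ CylSet (allowedPaths E)) : a :: b :: t ∈ CylSet (allowedPaths E) := by
  obtain ⟨v, c⟩ := a
  rcases h with ⟨_ | ⟨w, p⟩, hp, heq⟩ | ⟨_ | ⟨w, p⟩, hp, heq⟩ | ⟨_ | ⟨w, p⟩, hp, i, hi, heq⟩
  all_goals simp only [List.map_nil, List.take_nil, List.drop_nil, List.nil_append,
    List.map_cons, List.take_succ_cons, List.cons_append, List.cons.injEq, reduceCtorEq] at heq
  · obtain ⟨rfl, rfl⟩ := heq
    obtain ⟨hvw, rfl⟩ : E v w ∧ c = false := by simpa using hab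
    exact Or.inl ⟨v :: w :: p, cons_mem_allowedPaths hvw hp, rfl⟩
  · obtain ⟨rfl, rfl⟩ := heq
    rcases hab with ⟨rfl, rfl, -⟩ | ⟨hvw, rfl⟩
    · exact Or.inr (Or.inr ⟨v :: p, hp, 0, by simp, by simp⟩)
    · exact Or.inr (Or.inl ⟨v :: w :: p, cons_mem_allowedPaths hvw hp, rfl⟩)
  · obtain ⟨rfl, rfl⟩ := heq
    obtain ⟨hvw, rfl⟩ : E v w ∧ c = false := by simpa using hab
    exact Or.inr (Or.inr ⟨v :: w :: p, cons_mem_allowedPaths hvw hp, i + 1,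
      by simpa using hi, by simp⟩)

theorem mem_cylSet_of_isChain_boxRel {q : List (V × Bool)} (hq : q.IsChain (boxRel E))
    (hne : q ≠ []) : q ∈ CylSet (allowedPaths E) := by
  induction hq with
  | nil => exact absurd rfl hne
  | singleton a =>
    obtain ⟨v, _ | _⟩ := a
    · exact Or.inl ⟨[v], ⟨List.cons_ne_nil _ _, .singleton v⟩, rfl⟩
    · exact Or.inr (Or.inl ⟨[v], ⟨List.cons_ne_nil _ _, .singleton v⟩, rfl⟩)
  | cons_cons hab _ ih => exact cons_mem_cylSet hab (ih (List.cons_ne_nil _ _))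

end

theorem allowed_box_eq_cyl_allowed_general {V : Type*} (E : V → V → Prop) :
    allowedPaths (boxRel E) = CylSet (allowedPaths E) :=
  Set.Subset.antisymm (fun _ hq => mem_cylSet_of_isChain_boxRel hq.2 hq.1)
    cylSet_allowedPaths_subset

/-- For every simple digraph `G`, the allowed path complex of `G □ I`
equals the cylinder of the allowed path complex of `G`. -/
theorem allowed_box_eq_cyl_allowed {V : Type*} (E : V → V → Prop)
    (hE : ∀ v, ¬ E v v) :
    allowedPaths (boxRel E) = CylSet (allowedPaths E) :=
  allowed_box_eq_cyl_allowed_general E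
end

section
/- Let n ≥ 2, let K_n be the complete simple digraph on n vertices (x → y for all x ≠ y), and let 𝔽 be a field. Then C_n(dFl(K_n)) = 0 (K_n has no directed (n+1)-cliques), and there exists a nonzero chain c ∈ C_{n−1}(dFl(K_n)) with ∂c = 0. Consequently the degree-(n−1) homology of the chain complex (C_•(dFl(K_n)), ∂) is nonzero. -/
noncomputable section

variable (𝔽 : Type*) [Field 𝔽] {V : Type*}

/-- The simplicial boundary of a single path:
`∂(v₀…v_k) = Σ_{i=0}^{k} (−1)^i v₀…v̂_i…v_k`. -/
def bdSingle (p : List V) : List V →₀ 𝔽 :=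
  ∑ i ∈ Finset.range p.length,
    ((-1 : 𝔽) ^ i) • Finsupp.single (p.eraseIdx i) (1 : 𝔽)

/-- The boundary map on the free `𝔽`-vector space on paths. -/
def bd : (List V →₀ 𝔽) →ₗ[𝔽] (List V →₀ 𝔽) :=
  Finsupp.linearCombination 𝔽 (bdSingle 𝔽)

/-- `C_k(K)`: the span of the simplices of `K` with `k+1` vertices. -/
def Ck (K : Set (List V)) (k : ℕ) : Submodule 𝔽 (List V →₀ 𝔽) :=
  Submodule.span 𝔽 {x | ∃ p ∈ K, p.length = k + 1 ∧ x = Finsupp.single p (1 : 𝔽)}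

namespace List

theorem eraseIdx_eraseIdx_of_le {α : Type*} : ∀ (p : List α) {i j : ℕ}, i ≤ j →
    (p.eraseIdx i).eraseIdx j = (p.eraseIdx (j + 1)).eraseIdx i
  | [], _, _, _ => by simp
  | _ :: _, 0, _, _ => by simp
  | _ :: t, _ + 1, _ + 1, h => by
      simp only [eraseIdx_cons_succ, eraseIdx_eraseIdx_of_le t (Nat.le_of_succ_le_succ h)]
  | _ :: _, _ + 1, 0, h => absurd h (by omega)

end List

/-- The cancellation behind `∂ ∘ ∂ = 0`: the terms `(i, j)` with `i ≤ j` and `(j + 1, i)` cancel. -/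
theorem sum_range_sum_range_neg_one_pow_smul_eq_zero {R M : Type*} [Ring R] [AddCommGroup M]
    [Module R M] (L : ℕ) (f : ℕ → ℕ → M) (hf : ∀ i j, i ≤ j → f i j = f (j + 1) i) :
    ∑ i ∈ Finset.range L, ∑ j ∈ Finset.range (L - 1), ((-1 : R) ^ (i + j)) • f i j = 0 := by
  rw [← Finset.sum_product']
  refine Finset.sum_involution
    (fun a _ => if a.1 ≤ a.2 then (a.2 + 1, a.1) else (a.2, a.1 - 1)) ?_ ?_ ?_ ?_
  · rintro ⟨i, j⟩ -
    by_cases hij : i ≤ j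
    · have hsign : (-1 : R) ^ (j + 1 + i) = -(-1) ^ (i + j) := by
        rw [show j + 1 + i = i + j + 1 by omega, pow_succ, mul_neg_one]
      simp only [hij, if_true, ← hf i j hij, hsign, neg_smul, add_neg_cancel]
    · have hsign : (-1 : R) ^ (j + (i - 1)) = -(-1) ^ (i + j) := by
        rw [show i + j = j + (i - 1) + 1 by omega, pow_succ, mul_neg_one, neg_neg]
      have hface : f j (i - 1) = f i j := by
        rw [hf j (i - 1) (by omega), Nat.sub_add_cancel (show 1 ≤ i by omega)]
      simp only [hij, if_false, hface, hsign, neg_smul, add_neg_cancel]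
  · rintro ⟨i, j⟩ - -
    by_cases hij : i ≤ j <;> simp only [hij, if_true, if_false, ne_eq, Prod.mk.injEq] <;> omega
  · rintro ⟨i, j⟩ ha
    simp only [Finset.mem_product, Finset.mem_range] at ha ⊢
    by_cases hij : i ≤ j <;> simp only [hij, if_true, if_false] <;> omega
  · rintro ⟨i, j⟩ -
    by_cases hij : i ≤ j
    · simp [hij, show ¬ j + 1 ≤ i by omega]
    · simp [hij, show j ≤ i - 1 by omega, show i - 1 + 1 = i by omega]

theorem LinearMap.exists_mem_ne_zero_apply_eq_zero_of_map_lt {K M N : Type*} [DivisionRing K]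
    [AddCommGroup M] [Module K M] [AddCommGroup N] [Module K N] (f : M →ₗ[K] N)
    {A : Submodule K M} {B : Submodule K N} [FiniteDimensional K A] [FiniteDimensional K B]
    (hAB : A.map f < B) (hBA : Module.finrank K B ≤ Module.finrank K A) :
    ∃ c ∈ A, c ≠ 0 ∧ f c = 0 := by
  have hker : LinearMap.ker (f.domRestrict A) ≠ ⊥ := by
    intro h
    have hrank := (f.domRestrict A).finrank_range_add_finrank_ker
    rw [LinearMap.range_domRestrict, h, finrank_bot] at hrank
    have := Submodule.finrank_lt_finrank_of_lt hAB
    omega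
  obtain ⟨c, hc, hc0⟩ := Submodule.exists_mem_ne_zero_of_ne_bot hker
  exact ⟨c, c.2, fun h => hc0 (Subtype.ext h), hc⟩

section

variable {𝔽}

theorem bd_single (p : List V) (b : 𝔽) : bd 𝔽 (Finsupp.single p b) = b • bdSingle 𝔽 p :=
  Finsupp.linearCombination_single 𝔽 b p

theorem bd_bdSingle (p : List V) : bd 𝔽 (bdSingle 𝔽 p) = 0 := by
  have hface : ∀ i ∈ Finset.range p.length,
      bd 𝔽 (((-1 : 𝔽) ^ i) • Finsupp.single (p.eraseIdx i) (1 : 𝔽)) =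
      ∑ j ∈ Finset.range (p.length - 1),
        ((-1 : 𝔽) ^ (i + j)) • Finsupp.single ((p.eraseIdx i).eraseIdx j) (1 : 𝔽) := by
    intro i hi
    rw [map_smul, bd_single, one_smul, bdSingle,
      List.length_eraseIdx_of_lt (Finset.mem_range.mp hi), Finset.smul_sum]
    simp only [smul_smul, pow_add]
  rw [bdSingle, map_sum, Finset.sum_congr rfl hface]
  exact sum_range_sum_range_neg_one_pow_smul_eq_zero _ _
    fun i j hij => by rw [List.eraseIdx_eraseIdx_of_le p hij]

theorem bd_bd (x : List V →₀ 𝔽) : bd 𝔽 (bd 𝔽 x) = 0 := by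
  induction x using Finsupp.induction_linear with
  | zero => simp
  | add x y hx hy => rw [map_add, map_add, hx, hy, add_zero]
  | single p b => rw [bd_single, map_smul, bd_bdSingle, smul_zero]

theorem bdSingle_cons_apply_self {a : V} {t : List V} (h : (a :: t).Nodup) :
    bdSingle 𝔽 (a :: t) t = 1 := by
  rw [bdSingle, Finsupp.finsetSum_apply, Finset.sum_eq_single_of_mem 0 (by simp)]
  · simp
  · rintro (_ | k) - hk
    · exact absurd rfl hk
    · have hne : (a :: t).eraseIdx (k + 1) ≠ t := fun heq =>
        (List.nodup_cons.mp h).1 (heq ▸ List.mem_cons_self)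
      rw [Finsupp.smul_apply, Finsupp.single_eq_of_ne' hne, smul_zero]

theorem bdSingle_ne_zero {p : List V} (hp : p ≠ []) (hnd : p.Nodup) : bdSingle 𝔽 p ≠ 0 := by
  obtain ⟨a, t, rfl⟩ := List.exists_cons_of_ne_nil hp
  intro h
  simpa [h] using bdSingle_cons_apply_self (𝔽 := 𝔽) hnd

def simplices (K : Set (List V)) (k : ℕ) : Set (List V) :=
  {p | p ∈ K ∧ p.length = k + 1}

theorem finite_simplices [Finite V] (K : Set (List V)) (k : ℕ) : (simplices K k).Finite :=
  (List.finite_length_eq V (k + 1)).subset fun _ hp => hp.2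

theorem Ck_eq_span_image (K : Set (List V)) (k : ℕ) :
    Ck 𝔽 K k = Submodule.span 𝔽 ((Finsupp.single · (1 : 𝔽)) '' simplices K k) := by
  simp only [Ck, simplices, Set.image, Set.mem_ofPred_eq, and_assoc, eq_comm]

theorem Ck_eq_bot {K : Set (List V)} {k : ℕ} (h : ∀ p ∈ K, p.length ≠ k + 1) : Ck 𝔽 K k = ⊥ :=
  Submodule.span_eq_bot.2 fun _ ⟨p, hp, hlen, _⟩ => absurd hlen (h p hp)

instance [Finite V] (K : Set (List V)) (k : ℕ) : FiniteDimensional 𝔽 (Ck 𝔽 K k) := by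
  rw [Ck_eq_span_image]
  exact FiniteDimensional.span_of_finite 𝔽 ((finite_simplices K k).image _)

theorem finrank_Ck [Finite V] (K : Set (List V)) (k : ℕ) :
    Module.finrank 𝔽 (Ck 𝔽 K k) = Nat.card (simplices K k) := by
  have := (finite_simplices K k).fintype
  rw [Ck_eq_span_image, Set.image_eq_range, Nat.card_eq_fintype_card]
  exact finrank_span_eq_card
    ((Finsupp.linearIndependent_single_one 𝔽 (List V)).comp _ Subtype.val_injective)

theorem map_bd_Ck_le {K : Set (List V)} (hK : ∀ p ∈ K, 2 ≤ p.length → ∀ i, p.eraseIdx i ∈ K)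
    (k : ℕ) : (Ck 𝔽 K (k + 1)).map (bd 𝔽) ≤ Ck 𝔽 K k := by
  rw [Submodule.map_le_iff_le_comap, Ck, Submodule.span_le]
  rintro _ ⟨p, hp, hlen, rfl⟩
  rw [SetLike.mem_coe, Submodule.mem_comap, bd_single, one_smul, bdSingle]
  refine Submodule.sum_mem _ fun i hi => Submodule.smul_mem _ _ (Submodule.subset_span
    ⟨p.eraseIdx i, hK p hp (by omega) i, ?_, rfl⟩)
  rw [List.length_eraseIdx_of_lt (Finset.mem_range.mp hi), hlen, Nat.add_sub_cancel]

theorem exists_cycle_of_card_simplices_le [Finite V] {K : Set (List V)}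
    (hK : ∀ p ∈ K, 2 ≤ p.length → ∀ i, p.eraseIdx i ∈ K) (hnodup : ∀ p ∈ K, p.Nodup) {k : ℕ}
    (hk : (simplices K k).Nonempty)
    (hcard : Nat.card (simplices K k) ≤ Nat.card (simplices K (k + 1))) :
    ∃ c ∈ Ck 𝔽 K (k + 1), c ≠ 0 ∧ bd 𝔽 c = 0 := by
  obtain ⟨v, hvK, hvlen⟩ := hk
  have hv : Finsupp.single v 1 ∉ (Ck 𝔽 K (k + 1)).map (bd 𝔽) := by
    rintro ⟨x, -, hx⟩
    have hbd := congrArg (bd 𝔽) hx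
    rw [bd_bd, bd_single, one_smul] at hbd
    exact bdSingle_ne_zero (by rintro rfl; simp at hvlen) (hnodup v hvK) hbd.symm
  refine LinearMap.exists_mem_ne_zero_apply_eq_zero_of_map_lt (bd 𝔽)
    (SetLike.lt_iff_le_and_exists.2 ⟨map_bd_Ck_le hK k, _, Submodule.subset_span
      ⟨v, hvK, hvlen, rfl⟩, hv⟩) ?_
  rwa [finrank_Ck, finrank_Ck]

theorem eraseIdx_mem_dFl {E : V → V → Prop} {p : List V} (hp : p ∈ dFl E) (hlen : 2 ≤ p.length)
    (i : ℕ) : p.eraseIdx i ∈ dFl E := by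
  refine ⟨fun h => ?_, hp.2.1.sublist (p.eraseIdx_sublist i),
    hp.2.2.sublist (p.eraseIdx_sublist i)⟩
  have := congrArg List.length h
  rw [List.length_eraseIdx] at this
  split_ifs at this <;> simp only [List.length_nil] at this <;> omega

theorem mem_dFl_ne {α : Type*} {p : List α} : p ∈ dFl (fun x y : α => x ≠ y) ↔ p ≠ [] ∧ p.Nodup :=
  ⟨fun h => ⟨h.1, h.2.1⟩, fun h => ⟨h.1, h.2, h.2⟩⟩

theorem card_simplices_dFl_ne_le_succ {α : Type*} [Fintype α] {k : ℕ}
    (hk : k + 2 ≤ Fintype.card α) :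
    Nat.card (simplices (dFl fun x y : α => x ≠ y) k) ≤
      Nat.card (simplices (dFl fun x y : α => x ≠ y) (k + 1)) := by
  have hmissing (p : simplices (dFl fun x y : α => x ≠ y) k) : ∃ x, x ∉ (p : List α) :=
    Cardinal.exists_notMem_of_length_lt _ (by
      rw [Cardinal.mk_fintype, p.2.2]
      exact_mod_cast (show k + 1 < Fintype.card α by omega))
  choose x hx using hmissing
  have := (finite_simplices (dFl fun x y : α => x ≠ y) (k + 1)).to_subtype
  refine Nat.card_le_card_of_injective (fun p => ⟨p.1 ++ [x p], mem_dFl_ne.2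
    ⟨by simp, List.concat_eq_append ▸ p.2.1.2.1.concat (hx p)⟩, by simp [p.2.2]⟩)
    fun p q h => Subtype.ext (List.append_inj_left (congrArg Subtype.val h) (by rw [p.2.2, q.2.2]))

end

/-- For `n ≥ 2` and the complete simple digraph `K_n` on `n` vertices:
`C_n(dFl K_n) = 0` (no directed `(n+1)`-cliques), there is a nonzero `(n−1)`-cycle, and
the degree-`(n−1)` homology of `(C_•(dFl K_n), ∂)` is nonzero (there is a cycle in
`C_{n−1}` that is not the boundary of any chain of `C_n`). -/
theorem complete_digraph_homology_nonzero (n : ℕ) (hn : 2 ≤ n) :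
    (∀ p ∈ dFl (fun x y : Fin n => x ≠ y), p.length ≠ n + 1) ∧
    Ck 𝔽 (dFl (fun x y : Fin n => x ≠ y)) n = ⊥ ∧
    (∃ c : List (Fin n) →₀ 𝔽,
      c ∈ Ck 𝔽 (dFl (fun x y : Fin n => x ≠ y)) (n - 1) ∧ c ≠ 0 ∧ bd 𝔽 c = 0) ∧
    (∃ c : List (Fin n) →₀ 𝔽,
      c ∈ Ck 𝔽 (dFl (fun x y : Fin n => x ≠ y)) (n - 1) ∧ bd 𝔽 c = 0 ∧
      ∀ b ∈ Ck 𝔽 (dFl (fun x y : Fin n => x ≠ y)) n, bd 𝔽 b ≠ c) := by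
  have hlength : ∀ p ∈ dFl (fun x y : Fin n => x ≠ y), p.length ≠ n + 1 := fun p hp h => by
    simpa [h] using hp.2.1.length_le_card
  have hCn : Ck 𝔽 (dFl fun x y : Fin n => x ≠ y) n = ⊥ := Ck_eq_bot hlength
  obtain ⟨c, hcC, hc0, hcbd⟩ :
      ∃ c ∈ Ck 𝔽 (dFl fun x y : Fin n => x ≠ y) (n - 1), c ≠ 0 ∧ bd 𝔽 c = 0 := by
    obtain ⟨m, rfl⟩ : ∃ m, n = m + 2 := ⟨n - 2, by omega⟩
    have hsimplex : (List.finRange (m + 2)).tail ∈ simplices (dFl fun x y : Fin (m + 2) => x ≠ y) m :=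
      ⟨mem_dFl_ne.2 ⟨List.ne_nil_of_length_pos (by simp), (List.nodup_finRange _).tail⟩, by simp⟩
    exact exists_cycle_of_card_simplices_le (fun _ hp hlen => eraseIdx_mem_dFl hp hlen)
      (fun p hp => hp.2.1) ⟨_, hsimplex⟩ (card_simplices_dFl_ne_le_succ (by simp))
  refine ⟨hlength, hCn, ⟨c, hcC, hc0, hcbd⟩, c, hcC, hcbd, fun b hb => ?_⟩
  rw [hCn, Submodule.mem_bot] at hb
  rw [hb, map_zero]
  exact hc0.symm

end
end
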